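/- For every positive integer k and every complex number q with |q| < 1, the generating function of sptbar_k satisfies: sum over n ≥ 1 of sptbar_k(n) q^n = Pbar_k(q) · (-q^2;q)_∞ / (q^2;q)_∞ + (-1)^k · (q;q)_{k-1} / (-q;q)_k, where Pbar_1(q) = 1 and Pbar_k(q) = ((q^{k-1} - 1) Pbar_{k-1}(q) + q^{k-1}(1+q)) / (1+q^k) for k > 1. -/

import Mathlib

open scoped BigOperators

/-- The finite q-Pochhammer symbol `(a; q)_N = ∏_{j=0}^{N-1} (1 - a q^j)`. -/
noncomputable def qPoch (a q : ℂ) (N : ℕ) : ℂ := ∏ j ∈ Finset.range N, (1 - a * q ^ j)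

/-- The infinite q-Pochhammer symbol `(a; q)_∞ = ∏_{j=0}^{∞} (1 - a q^j)`. -/
noncomputable def qPochInf (a q : ℂ) : ℂ := ∏' j : ℕ, (1 - a * q ^ j)

/-- An overpartition of `n`: a multiset of positive non-overlined parts together with a
finset of positive overlined parts (the overlined parts are distinct), with total sum `n`. -/
structure Overpartition (n : ℕ) where
  parts : Multiset ℕ
  overlined : Finset ℕ
  parts_pos : ∀ x ∈ parts, 0 < x
  overlined_pos : ∀ x ∈ overlined, 0 < x
  sum_eq : parts.sum + ∑ x ∈ overlined, x = n

/-- `s` is the smallest non-overlined part of `π`, it appears exactly `k` times among the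
non-overlined parts, and every overlined part is greater than `s`. -/
def SptbarCond (k : ℕ) {n : ℕ} (π : Overpartition n) (s : ℕ) : Prop :=
  s ∈ π.parts ∧ (∀ x ∈ π.parts, s ≤ x) ∧ π.parts.count s = k ∧ ∀ x ∈ π.overlined, s < x

/-- `SptbarCond` together with: every part other than `s` is incongruent to `s` modulo 2. -/
def SptbarOCond (k : ℕ) {n : ℕ} (π : Overpartition n) (s : ℕ) : Prop :=
  SptbarCond k π s ∧ (∀ x ∈ π.parts, x ≠ s → x % 2 ≠ s % 2) ∧
    ∀ x ∈ π.overlined, x % 2 ≠ s % 2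

/-- The number of parts of `π` that are greater than `s`. -/
def numGreater {n : ℕ} (π : Overpartition n) (s : ℕ) : ℕ :=
  (π.parts.filter (fun x => s < x)).card + π.overlined.card

/-- The total number of parts of the overpartition `π`. -/
def numParts {n : ℕ} (π : Overpartition n) : ℕ :=
  π.parts.card + π.overlined.card

/-- `sptbar k n`: the number of overpartitions of `n` whose smallest non-overlined part `s`
appears exactly `k` times and all of whose overlined parts are greater than `s`. -/
noncomputable def sptbar (k n : ℕ) : ℕ :=
  Nat.card {π : Overpartition n // ∃ s, SptbarCond k π s}

/-- `sptbar' k n = a_e(k,n) - a_o(k,n)`. -/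
noncomputable def sptbar' (k n : ℕ) : ℤ :=
  (Nat.card {π : Overpartition n // ∃ s, SptbarCond k π s ∧ Even (numGreater π s)} : ℤ) -
    (Nat.card {π : Overpartition n // ∃ s, SptbarCond k π s ∧ Odd (numGreater π s)} : ℤ)

/-- `sptbarO k n`: as `sptbar k n`, with all parts other than the smallest non-overlined part
incongruent to it modulo 2. -/
noncomputable def sptbarO (k n : ℕ) : ℕ :=
  Nat.card {π : Overpartition n // ∃ s, SptbarOCond k π s}

/-- `sptbarO' k n = b_e(k,n) - b_o(k,n)`. -/
noncomputable def sptbarO' (k n : ℕ) : ℤ :=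
  (Nat.card {π : Overpartition n // ∃ s, SptbarOCond k π s ∧ Even (numGreater π s)} : ℤ) -
    (Nat.card {π : Overpartition n // ∃ s, SptbarOCond k π s ∧ Odd (numGreater π s)} : ℤ)

/-- The number of overpartitions of `n` into even parts. -/
noncomputable def pbarE (n : ℕ) : ℕ :=
  Nat.card {π : Overpartition n // (∀ x ∈ π.parts, Even x) ∧ ∀ x ∈ π.overlined, Even x}

/-- The number of overpartitions of `n` into odd parts with no non-overlined part equal to 1. -/
noncomputable def pbarOex (n : ℕ) : ℕ :=
  Nat.card {π : Overpartition n //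
    (∀ x ∈ π.parts, Odd x) ∧ (∀ x ∈ π.overlined, Odd x) ∧ (1 : ℕ) ∉ π.parts}

/-- Among overpartitions of `n` into odd parts with no non-overlined 1's: the number of those
with an even number of parts minus the number of those with an odd number of parts. -/
noncomputable def pbarOex' (n : ℕ) : ℤ :=
  (Nat.card {π : Overpartition n // ((∀ x ∈ π.parts, Odd x) ∧ (∀ x ∈ π.overlined, Odd x) ∧
      (1 : ℕ) ∉ π.parts) ∧ Even (numParts π)} : ℤ) -
    (Nat.card {π : Overpartition n // ((∀ x ∈ π.parts, Odd x) ∧ (∀ x ∈ π.overlined, Odd x) ∧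
      (1 : ℕ) ∉ π.parts) ∧ Odd (numParts π)} : ℤ)

/-- `sptkd k n`: the number of partitions of `n` whose smallest part appears exactly `k`
times and all of whose remaining parts are distinct. -/
noncomputable def sptkd (k n : ℕ) : ℕ :=
  Nat.card {m : Multiset ℕ // (∀ x ∈ m, 0 < x) ∧ m.sum = n ∧
    ∃ s, s ∈ m ∧ (∀ x ∈ m, s ≤ x) ∧ m.count s = k ∧ ∀ x ∈ m, x ≠ s → m.count x = 1}

/-- `Pbar q k`: `Pbar q 1 = 1` and
`Pbar q k = ((q^(k-1) - 1) * Pbar q (k-1) + q^(k-1)*(1+q)) / (1 + q^k)` for `k > 1`. -/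
noncomputable def Pbar (q : ℂ) : ℕ → ℂ
  | 0 => 0
  | 1 => 1
  | (k + 2) => ((q ^ (k + 1) - 1) * Pbar q (k + 1) + q ^ (k + 1) * (1 + q)) / (1 + q ^ (k + 2))

/-!
Removing the `k` copies of the smallest non-overlined part `s` identifies the overpartitions
counted by `sptbar k n` with the overpartitions of `n - ks` into parts `> s`, so
`∑ₙ sptbar k n qⁿ = S_k := ∑_{s ≥ 1} q^{ks} T_s`, where `T_s` is the generating function of
overpartitions into parts `> s`. Sorting these by the part `s + 1` gives
`(1 - q^{s+1}) T_s = (1 + q^{s+1}) T_{s+1}`. Iterated on partial sums, this bounds them by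
`∏ⱼ (1 + xʲ)/(1 - xʲ)`, whence convergence; together with `T_s → 1` it forces
`T_s = (-q^{s+1};q)_∞ / (q^{s+1};q)_∞`, the solution of the same recurrence tending to `1`.
The same relation makes `(1 + q^{k+1}) q^{(k+1)s} T_s - (q^k - 1) q^{ks} T_s` telescope in `s`:
`(1 + q^{k+1}) S_{k+1} = (q^k - 1) S_k + (q^{k+1} + q^k) T_1 - [k = 0]`, which is the
recurrence defining `Pbar`, corrected by the `q`-Pochhammer quotient.
-/

open Finset Filter Topology

theorem HasSum.ite_sub_mul_pow {R : Type*} [CommRing R] [TopologicalSpace R] [IsTopologicalRing R]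
    {f : ℕ → R} {q A : R} (h : HasSum (fun n => f n * q ^ n) A) (m : ℕ) :
    HasSum (fun n => (if m ≤ n then f (n - m) else 0) * q ^ n) (q ^ m * A) := by
  rw [← hasSum_nat_add_iff' m]
  have hzero : ∑ i ∈ range m, (if m ≤ i then f (i - m) else 0) * q ^ i = 0 :=
    sum_eq_zero fun i hi => by simp [(mem_range.1 hi).not_ge]
  simp only [hzero, sub_zero, le_add_iff_nonneg_left, zero_le, if_true, Nat.add_sub_cancel]
  exact (h.mul_left (q ^ m)).congr_fun fun n => by ring

theorem sum_range_ite_sub_mul_pow_le {f : ℕ → ℝ} (hf : ∀ n, 0 ≤ f n) {x : ℝ} (hx : 0 ≤ x)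
    (m M : ℕ) :
    ∑ n ∈ range M, (if m ≤ n then f (n - m) else 0) * x ^ n ≤
      x ^ m * ∑ n ∈ range M, f n * x ^ n := by
  calc ∑ n ∈ range M, (if m ≤ n then f (n - m) else 0) * x ^ n
      ≤ ∑ n ∈ range (m + M), (if m ≤ n then f (n - m) else 0) * x ^ n := by
        refine sum_le_sum_of_subset_of_nonneg (range_mono (Nat.le_add_left M m)) fun n _ _ => ?_
        split_ifs
        exacts [mul_nonneg (hf _) (pow_nonneg hx _), by simp]
    _ = x ^ m * ∑ n ∈ range M, f n * x ^ n := by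
        rw [sum_range_add, mul_sum, sum_eq_zero fun i hi => by simp [(mem_range.1 hi).not_ge]]
        simp only [zero_add, le_add_iff_nonneg_right, zero_le, if_true, Nat.add_sub_cancel_left]
        exact sum_congr rfl fun n _ => by ring

theorem tsum_eq_sub_of_tendsto {E : Type*} [AddCommGroup E] [TopologicalSpace E]
    [IsTopologicalAddGroup E] [T2Space E] {u G : ℕ → E} {L : E} (hu : Summable u)
    (huG : ∀ t, u t = G t - G (t + 1)) (hG : Tendsto G atTop (𝓝 L)) : ∑' t, u t = G 0 - L :=
  tendsto_nhds_unique hu.hasSum.tendsto_sum_nat <| by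
    simpa only [huG, sum_range_sub'] using tendsto_const_nhds.sub hG

theorem eq_of_eq_mul_succ_of_tendsto_one {M : Type*} [CommMonoid M] [TopologicalSpace M]
    [ContinuousMul M] [T2Space M] {c f g : ℕ → M} (hf : ∀ s, f s = c s * f (s + 1))
    (hg : ∀ s, g s = c s * g (s + 1)) (hf1 : Tendsto f atTop (𝓝 1))
    (hg1 : Tendsto g atTop (𝓝 1)) : f = g := by
  have hprod : ∀ {h : ℕ → M}, (∀ s, h s = c s * h (s + 1)) →
      ∀ s n, h s = (∏ i ∈ range n, c (s + i)) * h (n + s) := by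
    intro h hh s n
    induction n with
    | zero => simp
    | succ n ih => rw [ih, hh (n + s), prod_range_succ, mul_assoc, add_comm s n, add_right_comm]
  funext s
  have hfg : ∀ n, f s * g (n + s) = g s * f (n + s) := fun n => by
    rw [hprod hf s n, hprod hg s n, mul_right_comm, mul_assoc]
  have hshift := tendsto_add_atTop_nat s
  simpa using (tendsto_nhds_unique ((hf1.comp hshift).const_mul (g s))
    (((hg1.comp hshift).const_mul (f s)).congr hfg)).symm

section QPochhammer

variable {q : ℂ}

theorem norm_pow_succ_lt_one (hq : ‖q‖ < 1) (s : ℕ) : ‖q ^ (s + 1)‖ < 1 := by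
  rw [norm_pow]
  exact pow_lt_one₀ (norm_nonneg q) hq s.succ_ne_zero

theorem one_sub_ne_zero_of_norm_lt_one {a : ℂ} (ha : ‖a‖ < 1) : 1 - a ≠ 0 := fun h => by
  simp [← sub_eq_zero.1 h] at ha

theorem one_add_ne_zero_of_norm_lt_one {a : ℂ} (ha : ‖a‖ < 1) : 1 + a ≠ 0 := by
  simpa using one_sub_ne_zero_of_norm_lt_one (a := -a) (by rwa [norm_neg])

theorem qPoch_zero (a q : ℂ) : qPoch a q 0 = 1 :=
  prod_range_zero _

theorem qPoch_succ (a q : ℂ) (N : ℕ) : qPoch a q (N + 1) = qPoch a q N * (1 - a * q ^ N) :=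
  prod_range_succ _ _

theorem multipliable_one_sub_mul_pow (a : ℂ) (hq : ‖q‖ < 1) :
    Multipliable fun j => 1 - a * q ^ j := by
  simpa [sub_eq_add_neg] using multipliable_one_add_of_summable (f := fun j => -(a * q ^ j))
    (by simpa [norm_mul, norm_pow] using
      (summable_geometric_of_lt_one (norm_nonneg q) hq).mul_left ‖a‖)

theorem qPochInf_eq_mul (hq : ‖q‖ < 1) (a : ℂ) : qPochInf a q = (1 - a) * qPochInf (a * q) q := by
  have hshift : ∀ j, 1 - a * q ^ (j + 1) = 1 - a * q * q ^ j := fun j => by ring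
  rw [qPochInf, qPochInf, tprod_eq_zero_mul', pow_zero, mul_one]
  · simp only [hshift]
  · simpa only [hshift] using multipliable_one_sub_mul_pow (a * q) hq

theorem tendsto_qPochInf {ι : Type*} {l : Filter ι} {a : ι → ℂ} (ha : Tendsto a l (𝓝 0))
    (hq : ‖q‖ < 1) : Tendsto (fun i => qPochInf (a i) q) l (𝓝 1) := by
  have hbound : ∀ᶠ i in l, ‖a i‖ ≤ 1 :=
    ha.norm.eventually (eventually_le_nhds (by simp))
  simpa [qPochInf, sub_eq_add_neg] using tendsto_tprod_one_add_of_dominated_convergence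
    (f := fun i j => -(a i * q ^ j)) (g := fun _ => 0)
    (summable_geometric_of_lt_one (norm_nonneg q) hq)
    (fun j => by simpa using (ha.mul_const (q ^ j)).neg)
    (hbound.mono fun i hi j => by
      simpa [norm_mul, norm_pow] using mul_le_of_le_one_left (by positivity) hi)

theorem qPochInf_div_eq_mul_succ (hq : ‖q‖ < 1) (s : ℕ) :
    qPochInf (-q ^ (s + 1)) q / qPochInf (q ^ (s + 1)) q =
      (1 + q ^ (s + 1)) / (1 - q ^ (s + 1)) *
        (qPochInf (-q ^ (s + 2)) q / qPochInf (q ^ (s + 2)) q) := by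
  rw [qPochInf_eq_mul hq, qPochInf_eq_mul hq (q ^ (s + 1)), mul_div_mul_comm, sub_neg_eq_add,
    neg_mul, ← pow_succ]

theorem tendsto_qPochInf_div (hq : ‖q‖ < 1) :
    Tendsto (fun s : ℕ => qPochInf (-q ^ (s + 1)) q / qPochInf (q ^ (s + 1)) q) atTop (𝓝 1) := by
  have h := (tendsto_pow_atTop_nhds_zero_of_norm_lt_one hq).comp (tendsto_add_atTop_nat 1)
  have := (tendsto_qPochInf (by simpa using h.neg) hq).div (tendsto_qPochInf h hq) one_ne_zero
  rwa [div_one] at this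

end QPochhammer

namespace Overpartition

variable {n : ℕ}

@[ext]
theorem ext {π π' : Overpartition n} (h₁ : π.parts = π'.parts)
    (h₂ : π.overlined = π'.overlined) : π = π' := by
  cases π; cases π'; simp_all

theorem sum_overlined_eq_sum_val (π : Overpartition n) :
    ∑ x ∈ π.overlined, x = π.overlined.val.sum := by
  rw [Finset.sum_eq_multiset_sum, Multiset.map_id']

instance : Finite (Overpartition n) := by
  classical
  refine Finite.of_injective (β := Σ μ : n.Partition, μ.parts.toFinset.powerset)
    (fun π => ⟨⟨π.parts + π.overlined.val, ?_, ?_⟩, ⟨π.overlined, ?_⟩⟩) ?_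
  · intro i hi
    rcases Multiset.mem_add.1 hi with h | h
    exacts [π.parts_pos i h, π.overlined_pos i h]
  · rw [Multiset.sum_add, ← sum_overlined_eq_sum_val, π.sum_eq]
  · exact Finset.mem_powerset.2 fun x hx => Multiset.mem_toFinset.2 (Multiset.mem_add.2 (.inr hx))
  · intro π π' h
    have hov : π.overlined = π'.overlined := congrArg (fun y => (y.2 : Finset ℕ)) h
    have hall := congrArg (fun y => y.1.parts) h
    simp only [hov] at hall
    exact ext (add_right_cancel hall) hov

theorem le_of_mem_parts {x : ℕ} (π : Overpartition n) (hx : x ∈ π.parts) :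
    x ≤ n :=
  (Multiset.le_sum_of_mem hx).trans (by have := π.sum_eq; omega)

theorem le_of_mem_overlined {x : ℕ} (π : Overpartition n) (hx : x ∈ π.overlined) :
    x ≤ n :=
  (Finset.single_le_sum (f := id) (fun _ _ => Nat.zero_le _) hx).trans
    (by have := π.sum_eq; simp only [id]; omega)

def PartsGT (s : ℕ) (π : Overpartition n) : Prop :=
  (∀ x ∈ π.parts, s < x) ∧ ∀ x ∈ π.overlined, s < x

end Overpartition

noncomputable def pbarGT (s n : ℕ) : ℕ := Nat.card {π : Overpartition n // π.PartsGT s}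

theorem pbarGT_of_le {s n : ℕ} (h : n ≤ s) : pbarGT s n = if n = 0 then 1 else 0 := by
  split_ifs with hn
  · subst hn
    refine Nat.card_eq_one_iff_unique.2 ⟨⟨fun π π' => Subtype.ext ?_⟩,
      ⟨⟨⟨0, ∅, by simp, by simp, by simp⟩, by simp [Overpartition.PartsGT]⟩⟩⟩
    have h0 : ∀ ρ : Overpartition 0, ρ.parts = 0 ∧ ρ.overlined = ∅ := fun ρ =>
      ⟨Multiset.eq_zero_of_forall_notMem fun x hx =>
        (ρ.parts_pos x hx).ne' (Nat.le_zero.1 (ρ.le_of_mem_parts hx)),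
      Finset.eq_empty_of_forall_notMem fun x hx =>
        (ρ.overlined_pos x hx).ne' (Nat.le_zero.1 (ρ.le_of_mem_overlined hx))⟩
    exact Overpartition.ext ((h0 _).1.trans (h0 _).1.symm) ((h0 _).2.trans (h0 _).2.symm)
  · refine @Nat.card_of_isEmpty _ ⟨fun ⟨π, hπ⟩ => ?_⟩
    by_cases hp : π.parts = 0
    · obtain ⟨x, hx⟩ : π.overlined.Nonempty := by
        rw [Finset.nonempty_iff_ne_empty]
        rintro he
        have := π.sum_eq
        simp [hp, he] at this
        omega
      exact absurd (hπ.2 x hx) (not_lt.2 ((π.le_of_mem_overlined hx).trans h))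
    · obtain ⟨x, hx⟩ := Multiset.exists_mem_of_ne_zero hp
      exact absurd (hπ.1 x hx) (not_lt.2 ((π.le_of_mem_parts hx).trans h))

/-- Sort by the part `s + 1`: absent, present non-overlined (remove one copy), or present only
overlined (remove it). -/
def partsGTEquiv (s n : ℕ) :
    {π : Overpartition (n + (s + 1)) // π.PartsGT s} ≃
      ({π : Overpartition (n + (s + 1)) // π.PartsGT (s + 1)} ⊕
        {π : Overpartition n // π.PartsGT s}) ⊕ {π : Overpartition n // π.PartsGT (s + 1)} where
  toFun π :=
    if h₁ : s + 1 ∈ π.1.parts then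
      .inl (.inr ⟨⟨π.1.parts.erase (s + 1), π.1.overlined,
        fun x hx => π.1.parts_pos x (Multiset.mem_of_mem_erase hx), π.1.overlined_pos, by
          have := π.1.sum_eq
          rw [← Multiset.cons_erase h₁, Multiset.sum_cons] at this
          omega⟩,
        fun x hx => π.2.1 x (Multiset.mem_of_mem_erase hx), π.2.2⟩)
    else if h₂ : s + 1 ∈ π.1.overlined then
      .inr ⟨⟨π.1.parts, π.1.overlined.erase (s + 1), π.1.parts_pos,
        fun x hx => π.1.overlined_pos x (Finset.mem_of_mem_erase hx), by
          have := π.1.sum_eq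
          rw [← Finset.add_sum_erase _ _ h₂] at this
          omega⟩,
        fun x hx => lt_of_le_of_ne (π.2.1 x hx) fun h => h₁ (h ▸ hx),
        fun x hx => lt_of_le_of_ne (π.2.2 x (Finset.mem_of_mem_erase hx))
          fun h => (Finset.mem_erase.1 hx).1 h.symm⟩
    else
      .inl (.inl ⟨π.1, fun x hx => lt_of_le_of_ne (π.2.1 x hx) fun h => h₁ (h ▸ hx),
        fun x hx => lt_of_le_of_ne (π.2.2 x hx) fun h => h₂ (h ▸ hx)⟩)
  invFun
    | .inl (.inl π) => ⟨π.1, fun x hx => (π.2.1 x hx).trans' s.lt_succ_self,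
        fun x hx => (π.2.2 x hx).trans' s.lt_succ_self⟩
    | .inl (.inr π) => ⟨⟨(s + 1) ::ₘ π.1.parts, π.1.overlined,
        by simpa using π.1.parts_pos, π.1.overlined_pos, by
          rw [Multiset.sum_cons]
          have := π.1.sum_eq
          omega⟩, by simpa [Overpartition.PartsGT] using π.2⟩
    | .inr π => ⟨⟨π.1.parts, insert (s + 1) π.1.overlined, π.1.parts_pos,
        by simpa using π.1.overlined_pos, by
          rw [Finset.sum_insert fun h => (π.2.2 _ h).false]
          have := π.1.sum_eq
          omega⟩, fun x hx => (π.2.1 x hx).trans' s.lt_succ_self,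
        by simpa [Overpartition.PartsGT] using fun x hx => (π.2.2 x hx).trans' s.lt_succ_self⟩
  left_inv π := by
    by_cases h₁ : s + 1 ∈ π.1.parts
    · simp only [dif_pos h₁]
      exact Subtype.ext (Overpartition.ext (Multiset.cons_erase h₁) rfl)
    by_cases h₂ : s + 1 ∈ π.1.overlined
    · simp only [dif_neg h₁, dif_pos h₂]
      exact Subtype.ext (Overpartition.ext rfl (Finset.insert_erase h₂))
    · simp only [dif_neg h₁, dif_neg h₂]
  right_inv
    | .inl (.inl π) => by
        have h₁ : s + 1 ∉ π.1.parts := fun h => (π.2.1 _ h).false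
        have h₂ : s + 1 ∉ π.1.overlined := fun h => (π.2.2 _ h).false
        simp [h₁, h₂]
    | .inl (.inr π) => by simp
    | .inr π => by
        have h₁ : s + 1 ∉ π.1.parts := fun h => (π.2.1 _ h).false
        have h₂ : s + 1 ∉ π.1.overlined := fun h => (π.2.2 _ h).false
        simp [h₁, Finset.erase_insert h₂]

theorem pbarGT_add_succ (s n : ℕ) :
    pbarGT s (n + (s + 1)) = pbarGT (s + 1) (n + (s + 1)) + pbarGT s n + pbarGT (s + 1) n := by
  rw [pbarGT, Nat.card_congr (partsGTEquiv s n), Nat.card_sum, Nat.card_sum]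
  rfl

theorem pbarGT_eq_add_ite (s n : ℕ) :
    pbarGT s n = pbarGT (s + 1) n +
      if s + 1 ≤ n then pbarGT s (n - (s + 1)) + pbarGT (s + 1) (n - (s + 1)) else 0 := by
  split_ifs with h
  · obtain ⟨n, rfl⟩ := Nat.exists_eq_add_of_le' h
    rw [pbarGT_add_succ, Nat.add_sub_cancel, add_assoc]
  · rw [pbarGT_of_le (by omega), pbarGT_of_le (by omega), add_zero]

theorem pbarGT_le_of_le {s s' : ℕ} (h : s ≤ s') (n : ℕ) : pbarGT s' n ≤ pbarGT s n :=
  Nat.card_le_card_of_injective (fun π => ⟨π.1, fun x hx => h.trans_lt (π.2.1 x hx),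
    fun x hx => h.trans_lt (π.2.2 x hx)⟩) fun _ _ hπ => Subtype.ext (Subtype.mk.inj hπ)

noncomputable def sptbarAt (k s n : ℕ) : ℕ := Nat.card {π : Overpartition n // SptbarCond k π s}

namespace SptbarCond

variable {k n s : ℕ} {π : Overpartition n}

theorem unique {s' : ℕ} (h : SptbarCond k π s) (h' : SptbarCond k π s') : s = s' :=
  le_antisymm (h.2.1 s' h'.1) (h'.2.1 s h.1)

theorem replicate_le (h : SptbarCond k π s) : Multiset.replicate k s ≤ π.parts :=
  Multiset.le_count_iff_replicate_le.1 h.2.2.1.ge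

theorem lt_of_mem_sub (h : SptbarCond k π s) {x : ℕ}
    (hx : x ∈ π.parts - Multiset.replicate k s) : s < x := by
  refine lt_of_le_of_ne (h.2.1 x (Multiset.mem_of_le tsub_le_self hx)) fun hsx => ?_
  subst hsx
  have := Multiset.count_pos.2 hx
  rw [Multiset.count_sub, Multiset.count_replicate_self, h.2.2.1] at this
  omega

theorem sum_sub_replicate (h : SptbarCond k π s) :
    (π.parts - Multiset.replicate k s).sum + k * s = π.parts.sum := by
  rw [← smul_eq_mul, ← Multiset.sum_replicate, ← Multiset.sum_add,
    tsub_add_cancel_of_le h.replicate_le]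

end SptbarCond

theorem sptbar_eq_sum_sptbarAt (k n : ℕ) : sptbar k n = ∑ t ∈ range n, sptbarAt k (t + 1) n := by
  classical
  have := Fintype.ofFinite (Overpartition n)
  simp only [sptbar, sptbarAt, Nat.card_eq_fintype_card, Fintype.card_subtype]
  rw [← card_biUnion]
  · congr 1
    ext π
    simp only [mem_filter, mem_univ, true_and, mem_biUnion, mem_range]
    constructor
    · rintro ⟨s, hs⟩
      have hpos := π.parts_pos s hs.1
      have hle := π.le_of_mem_parts hs.1
      exact ⟨s - 1, by omega, by rwa [Nat.sub_add_cancel hpos]⟩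
    · rintro ⟨t, -, ht⟩
      exact ⟨t + 1, ht⟩
  · intro t _ t' _ htt'
    simp only [Function.onFun, disjoint_filter]
    intro π _ h h'
    exact htt' (by have := h.unique h'; omega)

def sptbarCondEquiv {k s n : ℕ} (hk : 0 < k) (hs : 0 < s) (h : k * s ≤ n) :
    {π : Overpartition n // SptbarCond k π s} ≃ {ρ : Overpartition (n - k * s) // ρ.PartsGT s} where
  toFun π := ⟨⟨π.1.parts - Multiset.replicate k s, π.1.overlined,
      fun x hx => hs.trans (π.2.lt_of_mem_sub hx), π.1.overlined_pos, by
        have := π.1.sum_eq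
        have := π.2.sum_sub_replicate
        omega⟩,
    fun x hx => π.2.lt_of_mem_sub hx, π.2.2.2.2⟩
  invFun ρ := ⟨⟨ρ.1.parts + Multiset.replicate k s, ρ.1.overlined, by
        simpa [or_imp, forall_and, Multiset.mem_replicate] using ⟨ρ.1.parts_pos, fun _ => hs⟩,
      ρ.1.overlined_pos, by
        have := ρ.1.sum_eq
        rw [Multiset.sum_add, Multiset.sum_replicate, smul_eq_mul]
        omega⟩, by
    refine ⟨Multiset.mem_add.2 (.inr (Multiset.mem_replicate.2 ⟨hk.ne', rfl⟩)), ?_, ?_, ρ.2.2⟩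
    · simpa [or_imp, forall_and, Multiset.mem_replicate] using fun x hx => (ρ.2.1 x hx).le
    · have : s ∉ ρ.1.parts := fun hs' => (ρ.2.1 s hs').false
      simp [Multiset.count_eq_zero_of_notMem this]⟩
  left_inv π := Subtype.ext (Overpartition.ext (tsub_add_cancel_of_le π.2.replicate_le) rfl)
  right_inv ρ := Subtype.ext (Overpartition.ext (add_tsub_cancel_right _ _) rfl)

theorem sptbarAt_eq {k s : ℕ} (hk : 0 < k) (hs : 0 < s) (n : ℕ) :
    sptbarAt k s n = if k * s ≤ n then pbarGT s (n - k * s) else 0 := by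
  split_ifs with h
  · exact Nat.card_congr (sptbarCondEquiv hk hs h)
  · refine @Nat.card_of_isEmpty _ ⟨fun π => h ?_⟩
    have := π.1.sum_eq
    have := π.2.sum_sub_replicate
    omega

section Summability

variable {x : ℝ}

theorem sum_range_pbarGT_le (hx0 : 0 ≤ x) (hx1 : x < 1) (s M : ℕ) :
    ∑ n ∈ range M, (pbarGT s n : ℝ) * x ^ n ≤
      Real.exp (2 * x ^ s / (1 - x)) * ∑ n ∈ range M, (pbarGT (s + 1) n : ℝ) * x ^ n := by
  set A := ∑ n ∈ range M, (pbarGT s n : ℝ) * x ^ n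
  set B := ∑ n ∈ range M, (pbarGT (s + 1) n : ℝ) * x ^ n
  set y := x ^ (s + 1)
  have hA : A ≤ B + y * (A + B) := by
    have hshift := sum_range_ite_sub_mul_pow_le
      (f := fun n => (pbarGT s n : ℝ) + pbarGT (s + 1) n) (fun n => by positivity) hx0 (s + 1) M
    rw [show ∑ n ∈ range M, ((pbarGT s n : ℝ) + pbarGT (s + 1) n) * x ^ n = A + B by
      simp only [A, B, add_mul, sum_add_distrib]] at hshift
    calc A = B + ∑ n ∈ range M, (if s + 1 ≤ n then
          (pbarGT s (n - (s + 1)) : ℝ) + pbarGT (s + 1) (n - (s + 1)) else 0) * x ^ n := by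
          simp only [A, B, ← sum_add_distrib]
          refine sum_congr rfl fun n _ => ?_
          conv_lhs => rw [pbarGT_eq_add_ite]
          split_ifs <;> push_cast <;> ring
      _ ≤ B + y * (A + B) := by linarith
  have hB : 0 ≤ B := sum_nonneg fun n _ => by positivity
  have hy0 : 0 ≤ y := by positivity
  have hyx : y ≤ x ^ s := pow_le_pow_of_le_one hx0 hx1.le s.le_succ
  have hyx' : y ≤ x := pow_le_of_le_one hx0 hx1.le s.succ_ne_zero
  have hc : 2 * y / (1 - y) ≤ 2 * x ^ s / (1 - x) :=
    div_le_div₀ (by positivity) (by linarith) (by linarith) (by linarith)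
  calc A ≤ (1 + 2 * y / (1 - y)) * B := by
        rw [show (1 + 2 * y / (1 - y)) * B = (1 + y) * B / (1 - y) by
          field_simp [show 1 - y ≠ 0 by linarith]; ring, le_div_iff₀ (by linarith)]
        linarith
    _ ≤ (1 + 2 * x ^ s / (1 - x)) * B := by gcongr
    _ ≤ Real.exp (2 * x ^ s / (1 - x)) * B := by
        gcongr
        linarith [Real.add_one_le_exp (2 * x ^ s / (1 - x))]

theorem sum_range_pbarGT_zero_le (hx0 : 0 ≤ x) (hx1 : x < 1) (M : ℕ) :
    ∑ n ∈ range M, (pbarGT 0 n : ℝ) * x ^ n ≤ Real.exp (2 / (1 - x) ^ 2) := by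
  set A : ℕ → ℝ := fun s => ∑ n ∈ range M, (pbarGT s n : ℝ) * x ^ n
  have hiter : ∀ s, A 0 ≤ Real.exp (2 * (∑ j ∈ range s, x ^ j) / (1 - x)) * A s := by
    intro s
    induction s with
    | zero => simp
    | succ s ih =>
      calc A 0 ≤ Real.exp (2 * (∑ j ∈ range s, x ^ j) / (1 - x)) * A s := ih
        _ ≤ Real.exp (2 * (∑ j ∈ range s, x ^ j) / (1 - x)) *
            (Real.exp (2 * x ^ s / (1 - x)) * A (s + 1)) := by
          gcongr
          exact sum_range_pbarGT_le hx0 hx1 s M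
        _ = Real.exp (2 * (∑ j ∈ range (s + 1), x ^ j) / (1 - x)) * A (s + 1) := by
          rw [← mul_assoc, ← Real.exp_add, sum_range_succ]
          ring_nf
  -- parts `> M` and size `< M` leave only the empty overpartition
  have hAM : A M ≤ 1 := by
    simp only [A]
    rw [sum_congr rfl fun n hn => by rw [pbarGT_of_le (mem_range.1 hn).le]]
    simp only [Nat.cast_ite, Nat.cast_one, Nat.cast_zero, ite_mul, one_mul, zero_mul,
      sum_ite_eq', mem_range]
    split_ifs <;> norm_num
  have hgeom : ∑ j ∈ range M, x ^ j ≤ 1 / (1 - x) := by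
    rw [one_div, ← tsum_geometric_of_lt_one hx0 hx1]
    exact (summable_geometric_of_lt_one hx0 hx1).sum_le_tsum _ fun i _ => pow_nonneg hx0 i
  have hexp : 2 * (∑ j ∈ range M, x ^ j) / (1 - x) ≤ 2 / (1 - x) ^ 2 := by
    calc 2 * (∑ j ∈ range M, x ^ j) / (1 - x) ≤ 2 * (1 / (1 - x)) / (1 - x) := by
          gcongr
      _ = 2 / (1 - x) ^ 2 := by field_simp
  calc A 0 ≤ Real.exp (2 * (∑ j ∈ range M, x ^ j) / (1 - x)) * A M := hiter M
    _ ≤ Real.exp (2 / (1 - x) ^ 2) * 1 :=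
      mul_le_mul (Real.exp_le_exp.2 hexp) hAM (sum_nonneg fun n _ => by positivity) (by positivity)
    _ = _ := mul_one _

theorem summable_pbarGT_zero_mul_pow (hx0 : 0 ≤ x) (hx1 : x < 1) :
    Summable fun n => (pbarGT 0 n : ℝ) * x ^ n :=
  summable_of_sum_range_le (fun n => by positivity) (sum_range_pbarGT_zero_le hx0 hx1)

theorem pbarGT_mul_pow_le (hx0 : 0 ≤ x) (s n : ℕ) :
    (pbarGT s n : ℝ) * x ^ n ≤ (pbarGT 0 n : ℝ) * x ^ n := by
  gcongr
  exact pbarGT_le_of_le (Nat.zero_le s) n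

theorem summable_pbarGT_mul_pow (hx0 : 0 ≤ x) (hx1 : x < 1) (s : ℕ) :
    Summable fun n => (pbarGT s n : ℝ) * x ^ n :=
  (summable_pbarGT_zero_mul_pow hx0 hx1).of_nonneg_of_le (fun _ => by positivity)
    (pbarGT_mul_pow_le hx0 s)

theorem tsum_pbarGT_mul_pow_le (hx0 : 0 ≤ x) (hx1 : x < 1) (s : ℕ) :
    ∑' n, (pbarGT s n : ℝ) * x ^ n ≤ ∑' n, (pbarGT 0 n : ℝ) * x ^ n :=
  (summable_pbarGT_mul_pow hx0 hx1 s).tsum_le_tsum (pbarGT_mul_pow_le hx0 s)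
    (summable_pbarGT_zero_mul_pow hx0 hx1)

end Summability

noncomputable def pbarGTGenFun (q : ℂ) (s : ℕ) : ℂ := ∑' n, (pbarGT s n : ℂ) * q ^ n

section GenFun

variable {q : ℂ}

theorem norm_pbarGT_mul_pow (q : ℂ) (s n : ℕ) :
    ‖(pbarGT s n : ℂ) * q ^ n‖ = (pbarGT s n : ℝ) * ‖q‖ ^ n := by
  rw [norm_mul, norm_pow, Complex.norm_natCast]

theorem summable_norm_pbarGT_mul_pow (hq : ‖q‖ < 1) (s : ℕ) :
    Summable fun n => ‖(pbarGT s n : ℂ) * q ^ n‖ := by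
  simpa only [norm_pbarGT_mul_pow] using summable_pbarGT_mul_pow (norm_nonneg q) hq s

theorem hasSum_pbarGTGenFun (hq : ‖q‖ < 1) (s : ℕ) :
    HasSum (fun n => (pbarGT s n : ℂ) * q ^ n) (pbarGTGenFun q s) :=
  (summable_norm_pbarGT_mul_pow hq s).of_norm.hasSum

theorem norm_pbarGTGenFun_le (hq : ‖q‖ < 1) (s : ℕ) :
    ‖pbarGTGenFun q s‖ ≤ ∑' n, (pbarGT 0 n : ℝ) * ‖q‖ ^ n := by
  refine (norm_tsum_le_tsum_norm (summable_norm_pbarGT_mul_pow hq s)).trans ?_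
  simpa only [norm_pbarGT_mul_pow] using tsum_pbarGT_mul_pow_le (norm_nonneg q) hq s

theorem pbarGTGenFun_eq (hq : ‖q‖ < 1) (s : ℕ) :
    pbarGTGenFun q s =
      pbarGTGenFun q (s + 1) + q ^ (s + 1) * (pbarGTGenFun q s + pbarGTGenFun q (s + 1)) := by
  have hsum : HasSum (fun n => ((pbarGT s n : ℂ) + pbarGT (s + 1) n) * q ^ n)
      (pbarGTGenFun q s + pbarGTGenFun q (s + 1)) :=
    ((hasSum_pbarGTGenFun hq s).add (hasSum_pbarGTGenFun hq (s + 1))).congr_fun fun n => by ring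
  refine (((hasSum_pbarGTGenFun hq (s + 1)).add (hsum.ite_sub_mul_pow (s + 1))).congr_fun
    fun n => ?_).tsum_eq
  conv_lhs => rw [pbarGT_eq_add_ite]
  split_ifs <;> push_cast <;> ring

theorem pbarGTGenFun_eq_mul_succ (hq : ‖q‖ < 1) (s : ℕ) :
    pbarGTGenFun q s = (1 + q ^ (s + 1)) / (1 - q ^ (s + 1)) * pbarGTGenFun q (s + 1) := by
  rw [div_mul_eq_mul_div, eq_div_iff (one_sub_ne_zero_of_norm_lt_one (norm_pow_succ_lt_one hq s))]
  linear_combination pbarGTGenFun_eq hq s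

theorem tendsto_pbarGTGenFun (hq : ‖q‖ < 1) : Tendsto (pbarGTGenFun q) atTop (𝓝 1) := by
  have hlim : ∀ n, Tendsto (fun s => (pbarGT s n : ℂ) * q ^ n) atTop
      (𝓝 (if n = 0 then 1 else 0)) := fun n =>
    tendsto_const_nhds.congr' <| (eventually_ge_atTop n).mono fun s hs => by
      beta_reduce
      rw [pbarGT_of_le hs]
      split_ifs with h <;> simp [h]
  show Tendsto (fun s => ∑' n, (pbarGT s n : ℂ) * q ^ n) atTop (𝓝 1)
  simpa using tendsto_tsum_of_dominated_convergence
    (summable_pbarGT_zero_mul_pow (norm_nonneg q) hq) hlim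
    (.of_forall fun s n => (norm_pbarGT_mul_pow q s n).trans_le
      (pbarGT_mul_pow_le (norm_nonneg q) s n))

end GenFun

theorem pbarGTGenFun_eq_qPochInf_div {q : ℂ} (hq : ‖q‖ < 1) (s : ℕ) :
    pbarGTGenFun q s = qPochInf (-q ^ (s + 1)) q / qPochInf (q ^ (s + 1)) q :=
  congrFun (eq_of_eq_mul_succ_of_tendsto_one (pbarGTGenFun_eq_mul_succ hq)
    (qPochInf_div_eq_mul_succ hq) (tendsto_pbarGTGenFun hq) (tendsto_qPochInf_div hq)) s

noncomputable def sptbarGenFun (q : ℂ) (k : ℕ) : ℂ :=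
  ∑' t, q ^ (k * (t + 1)) * pbarGTGenFun q (t + 1)


theorem HasSum.sptbarAt {R : Type*} [CommRing R] [TopologicalSpace R] [IsTopologicalRing R]
    {k s : ℕ} (hk : 0 < k) (hs : 0 < s) {q A : R}
    (h : HasSum (fun n => (pbarGT s n : R) * q ^ n) A) :
    HasSum (fun n => (sptbarAt k s n : R) * q ^ n) (q ^ (k * s) * A) := by
  simpa only [sptbarAt_eq hk hs, Nat.cast_ite, Nat.cast_zero] using h.ite_sub_mul_pow (k * s)

theorem summable_sptbarAt_mul_pow {k : ℕ} (hk : 0 < k) {q : ℂ} (hq : ‖q‖ < 1) :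
    Summable fun p : ℕ × ℕ => (sptbarAt k (p.1 + 1) p.2 : ℂ) * q ^ p.2 := by
  set C := ∑' n, (pbarGT 0 n : ℝ) * ‖q‖ ^ n
  have hrow : ∀ t, HasSum (fun n => (sptbarAt k (t + 1) n : ℝ) * ‖q‖ ^ n)
      (‖q‖ ^ (k * (t + 1)) * ∑' n, (pbarGT (t + 1) n : ℝ) * ‖q‖ ^ n) := fun t =>
    (summable_pbarGT_mul_pow (norm_nonneg q) hq (t + 1)).hasSum.sptbarAt hk t.succ_pos
  have hrow_le : ∀ t, ‖q‖ ^ (k * (t + 1)) * ∑' n, (pbarGT (t + 1) n : ℝ) * ‖q‖ ^ n ≤ ‖q‖ ^ t * C :=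
    fun t => mul_le_mul (pow_le_pow_of_le_one (norm_nonneg q) hq.le (by nlinarith))
      (tsum_pbarGT_mul_pow_le (norm_nonneg q) hq (t + 1)) (tsum_nonneg fun n => by positivity)
      (by positivity)
  refine Summable.of_norm ?_
  simp only [norm_mul, norm_pow, Complex.norm_natCast]
  refine (summable_prod_of_nonneg fun _ => by positivity).2 ⟨fun t => (hrow t).summable, ?_⟩
  simp only [(hrow _).tsum_eq]
  exact ((summable_geometric_of_lt_one (norm_nonneg q) hq).mul_right C).of_nonneg_of_le
    (fun t => by positivity) hrow_le

theorem hasSum_sptbar_mul_pow {k : ℕ} (hk : 0 < k) {q : ℂ} (hq : ‖q‖ < 1) :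
    HasSum (fun n => (sptbar k n : ℂ) * q ^ n) (sptbarGenFun q k) := by
  set g : ℕ × ℕ → ℂ := fun p => (sptbarAt k (p.1 + 1) p.2 : ℂ) * q ^ p.2
  have hrow : ∀ t, HasSum (fun n => g (t, n)) (q ^ (k * (t + 1)) * pbarGTGenFun q (t + 1)) :=
    fun t => (hasSum_pbarGTGenFun hq (t + 1)).sptbarAt hk t.succ_pos
  have hcol : ∀ n, HasSum (fun t => g (t, n)) ((sptbar k n : ℂ) * q ^ n) := by
    intro n
    rw [sptbar_eq_sum_sptbarAt, Nat.cast_sum, sum_mul]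
    refine hasSum_sum_of_ne_finset_zero fun t ht => ?_
    have : ¬k * (t + 1) ≤ n := by
      have := Nat.le_mul_of_pos_left (t + 1) hk
      simp only [mem_range] at ht
      omega
    simp [g, sptbarAt_eq hk t.succ_pos, this]
  have hsum : Summable g := summable_sptbarAt_mul_pow hk hq
  rw [sptbarGenFun, (hsum.hasSum.prod_fiberwise hrow).tsum_eq]
  exact ((Equiv.prodComm ℕ ℕ).hasSum_iff.2 hsum.hasSum).prod_fiberwise hcol

section SptbarGenFun

variable {q : ℂ}

theorem summable_pow_mul_pbarGTGenFun (hq : ‖q‖ < 1) {m : ℕ} (hm : 0 < m) :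
    Summable fun t => q ^ (m * (t + 1)) * pbarGTGenFun q (t + 1) := by
  refine Summable.of_norm_bounded
    ((summable_geometric_of_lt_one (norm_nonneg q) hq).mul_left
      (∑' n, (pbarGT 0 n : ℝ) * ‖q‖ ^ n)) fun t => ?_
  rw [norm_mul, norm_pow, mul_comm]
  exact mul_le_mul (norm_pbarGTGenFun_le hq _)
    (pow_le_pow_of_le_one (norm_nonneg q) hq.le (by nlinarith)) (by positivity)
    (tsum_nonneg fun n => by positivity)

theorem tendsto_pow_mul_succ (hq : ‖q‖ < 1) (j : ℕ) :
    Tendsto (fun t : ℕ => q ^ (j * (t + 1))) atTop (𝓝 (if j = 0 then 1 else 0)) := by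
  rcases j with _ | j
  · simp
  · simpa [pow_mul, Function.comp_def] using (tendsto_pow_atTop_nhds_zero_of_norm_lt_one
      (norm_pow_succ_lt_one hq j)).comp (tendsto_add_atTop_nat 1)

theorem sptbarGenFun_succ (hq : ‖q‖ < 1) (j : ℕ) :
    (1 + q ^ (j + 1)) * sptbarGenFun q (j + 1) =
      (q ^ j - 1) * sptbarGenFun q j + (q ^ (j + 1) + q ^ j) * pbarGTGenFun q 1 -
        if j = 0 then 1 else 0 := by
  set G : ℕ → ℂ := fun t => (q ^ ((j + 1) * (t + 1)) + q ^ (j * (t + 1))) * pbarGTGenFun q (t + 1)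
  have hX : Summable fun t => q ^ ((j + 1) * (t + 1)) * pbarGTGenFun q (t + 1) :=
    summable_pow_mul_pbarGTGenFun hq j.succ_pos
  have hY : Summable fun t => (q ^ j - 1) * (q ^ (j * (t + 1)) * pbarGTGenFun q (t + 1)) := by
    -- for `j = 0` the coefficient vanishes, while the series itself diverges
    rcases j.eq_zero_or_pos with rfl | hj
    · simp
    · exact (summable_pow_mul_pbarGTGenFun hq hj).mul_left _
  have hterm : ∀ t, (1 + q ^ (j + 1)) * (q ^ ((j + 1) * (t + 1)) * pbarGTGenFun q (t + 1)) -
      (q ^ j - 1) * (q ^ (j * (t + 1)) * pbarGTGenFun q (t + 1)) = G t - G (t + 1) := fun t => by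
    linear_combination (-q ^ (j * (t + 1)) * q ^ j) * pbarGTGenFun_eq hq (t + 1)
  have hG : Tendsto G atTop (𝓝 (if j = 0 then 1 else 0)) := by
    simpa using ((tendsto_pow_mul_succ hq (j + 1)).add (tendsto_pow_mul_succ hq j)).mul
      ((tendsto_pbarGTGenFun hq).comp (tendsto_add_atTop_nat 1))
  have htel := tsum_eq_sub_of_tendsto ((hX.mul_left _).sub hY) hterm hG
  rw [(hX.mul_left _).tsum_sub hY, tsum_mul_left, tsum_mul_left] at htel
  simp only [G, zero_add, mul_one] at htel
  simp only [sptbarGenFun]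
  linear_combination htel

theorem sptbarGenFun_eq (hq : ‖q‖ < 1) (j : ℕ) :
    sptbarGenFun q (j + 1) = Pbar q (j + 1) * pbarGTGenFun q 1 +
      (-1) ^ (j + 1) * (qPoch q q j / qPoch (-q) q (j + 1)) := by
  induction j with
  | zero =>
    have h := sptbarGenFun_succ hq 0
    have hne : 1 + q ≠ 0 := by simpa using one_add_ne_zero_of_norm_lt_one hq
    simp only [zero_add, pow_one, pow_zero, sub_self, zero_mul, if_true] at h
    simp only [zero_add, Pbar, qPoch_succ, qPoch_zero, pow_zero, mul_one, one_mul, sub_neg_eq_add]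
    field_simp
    linear_combination h
  | succ j ih =>
    have h := sptbarGenFun_succ hq (j + 1)
    have hne := one_add_ne_zero_of_norm_lt_one (norm_pow_succ_lt_one hq (j + 1))
    simp only [if_neg j.succ_ne_zero, sub_zero, ih] at h
    have e : 1 - -q * q ^ (j + 1) = 1 + q ^ (j + 2) := by ring
    rw [qPoch_succ q q j, qPoch_succ (-q) q (j + 1), mul_div_mul_comm, Pbar, e]
    field_simp
    linear_combination h

end SptbarGenFun

theorem sptbar_genFn (k : ℕ) (hk : 1 ≤ k) (q : ℂ) (hq : ‖q‖ < 1) :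
    ∑' n : ℕ, (sptbar k (n + 1) : ℂ) * q ^ (n + 1) =
      Pbar q k * (qPochInf (-q ^ 2) q / qPochInf (q ^ 2) q) +
        (-1) ^ k * (qPoch q q (k - 1) / qPoch (-q) q k) := by
  obtain ⟨j, rfl⟩ := Nat.exists_eq_add_of_le' hk
  have h := (hasSum_nat_add_iff' 1).2 (hasSum_sptbar_mul_pow (by omega : 0 < j + 1) hq)
  simp only [sptbar_eq_sum_sptbarAt _ 0, range_one, sum_singleton, range_zero, sum_empty,
    Nat.cast_zero, zero_mul, sub_zero] at h
  rw [h.tsum_eq, sptbarGenFun_eq hq j, pbarGTGenFun_eq_qPochInf_div hq, Nat.add_sub_cancel]
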